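/- arXiv:1403.5464 — 3 statements merged into one kernel-verified Lean document; each statement's English description precedes it below -/
import Mathlib

section
/- Let R be a discrete valuation ring with fraction field K, and let M be an n × n invertible matrix over R with det M = Δ. If M' ∈ Matₙ(R) satisfies M' ≡ M (mod π^k) with k > 2·val(Δ), then M' is invertible over K and the inverse satisfies (M')⁻¹ ≡ M⁻¹ (mod π^{k - 2·val(Δ)}) as matrices over K (i.e., every entry of (M')⁻¹ - M⁻¹ has valuation ≥ k - 2·val(Δ)). -/
/-!
Entrywise congruence mod `π ^ k` passes through the polynomial maps `det` and `adjugate`, so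
`det M' ≡ det M` mod `π ^ k`; as `k > val (det M) = v`, the ultrametric inequality forces
`val (det M') = v`. Then `(M')⁻¹ - M⁻¹ = (det M • adj M' - det M' • adj M) / (det M' * det M)`,
with numerator `det M • (adj M' - adj M) - (det M' - det M) • adj M ≡ 0` mod `π ^ k` and
denominator of valuation `2 v`.
-/

namespace Matrix

variable {n R : Type*} [CommRing R]

section Congruence

variable {I : Ideal R} {A B : Matrix n n R}

theorem map_quotient_mk_eq_of_sub_mem (h : ∀ i j, B i j - A i j ∈ I) :
    B.map (Ideal.Quotient.mk I) = A.map (Ideal.Quotient.mk I) :=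
  ext fun i j => Ideal.Quotient.eq.mpr (h i j)

variable [Fintype n] [DecidableEq n]

theorem det_sub_mem_of_sub_mem (h : ∀ i j, B i j - A i j ∈ I) : B.det - A.det ∈ I := by
  rw [← Ideal.Quotient.eq, RingHom.map_det, RingHom.map_det]
  exact congrArg det (map_quotient_mk_eq_of_sub_mem h)

theorem adjugate_sub_mem_of_sub_mem (h : ∀ i j, B i j - A i j ∈ I) (i j : n) :
    B.adjugate i j - A.adjugate i j ∈ I := by
  rw [← Ideal.Quotient.eq]
  have := congrFun₂ (congrArg adjugate (map_quotient_mk_eq_of_sub_mem h)) i j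
  rwa [← RingHom.mapMatrix_apply, ← RingHom.mapMatrix_apply, ← RingHom.map_adjugate,
    ← RingHom.map_adjugate] at this

theorem det_mul_adjugate_sub_det_mul_adjugate_mem (h : ∀ i j, B i j - A i j ∈ I) (i j : n) :
    A.det * B.adjugate i j - B.det * A.adjugate i j ∈ I := by
  have hsplit : A.det * B.adjugate i j - B.det * A.adjugate i j =
      A.det * (B.adjugate i j - A.adjugate i j) - (B.det - A.det) * A.adjugate i j := by ring
  rw [hsplit]
  exact sub_mem (I.mul_mem_left _ (adjugate_sub_mem_of_sub_mem h i j))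
    (I.mul_mem_right _ (det_sub_mem_of_sub_mem h))

end Congruence

variable [Fintype n] [DecidableEq n] {K : Type*} [Field K] (f : R →+* K)

theorem inv_map_apply (A : Matrix n n R) (i j : n) :
    (A.map f)⁻¹ i j = f (A.adjugate i j) / f A.det := by
  rw [inv_def, smul_apply, Ring.inverse_eq_inv', smul_eq_mul, ← RingHom.mapMatrix_apply,
    ← RingHom.map_det, ← RingHom.map_adjugate, RingHom.mapMatrix_apply, map_apply, inv_mul_eq_div]

theorem inv_map_sub_inv_map_apply {A B : Matrix n n R} (hA : f A.det ≠ 0) (hB : f B.det ≠ 0)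
    (i j : n) : ((B.map f)⁻¹ - (A.map f)⁻¹) i j =
      f (A.det * B.adjugate i j - B.det * A.adjugate i j) / f (B.det * A.det) := by
  rw [sub_apply, inv_map_apply, inv_map_apply, div_sub_div _ _ hB hA]
  simp only [map_sub, map_mul]
  ring

end Matrix

namespace IsDiscreteValuationRing

variable {R : Type*} [CommRing R] [IsDomain R] [IsDiscreteValuationRing R]

theorem ne_zero_of_addVal_eq_natCast {a : R} {v : ℕ} (h : addVal R a = v) : a ≠ 0 := by
  rintro rfl
  exact ENat.top_ne_natCast v (addVal_zero (R := R) ▸ h)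

theorem addVal_eq_of_addVal_lt_addVal_sub {a b : R} (h : addVal R a < addVal R (b - a)) :
    addVal R b = addVal R a := by
  simpa using (addVal R).map_add_eq_of_lt_left h

theorem le_addVal_of_pow_dvd {π a : R} (hπ : Irreducible π) {k : ℕ} (h : π ^ k ∣ a) :
    (k : ℕ∞) ≤ addVal R a :=
  hπ.addVal_pow k ▸ addVal_le_iff_dvd.mpr h

theorem exists_eq_mul_pow_mul_of_pow_dvd {π a b : R} (hπ : Irreducible π) {v k : ℕ}
    (hb : addVal R b = v) (hvk : v ≤ k) (ha : π ^ k ∣ a) : ∃ r, a = b * (π ^ (k - v) * r) := by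
  have hval : addVal R (b * π ^ (k - v)) ≤ addVal R a := by
    rw [addVal_mul, hb, hπ.addVal_pow, ← Nat.cast_add, Nat.add_sub_cancel' hvk]
    exact le_addVal_of_pow_dvd hπ ha
  obtain ⟨r, hr⟩ := addVal_le_iff_dvd.mp hval
  exact ⟨r, by rw [hr, mul_assoc]⟩

end IsDiscreteValuationRing

open IsDiscreteValuationRing in
theorem inverse_precision_general {R : Type*} [CommRing R] [IsDomain R] [IsDiscreteValuationRing R]
    {K : Type*} [Field K] [Algebra R K] [IsFractionRing R K]
    (π : R) (hπ : Irreducible π) {n : ℕ} (M M' : Matrix (Fin n) (Fin n) R)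
    (v k : ℕ)
    (hv : IsDiscreteValuationRing.addVal R M.det = (v : ℕ∞))
    (hk : 2 * v < k)
    (hcong : ∀ i j, π ^ k ∣ M' i j - M i j) :
    M'.det ≠ 0 ∧
    ∀ i j, ∃ r : R,
      ((M'.map (algebraMap R K))⁻¹ - (M.map (algebraMap R K))⁻¹) i j =
        algebraMap R K (π ^ (k - 2 * v) * r) := by
  have hI : ∀ i j, M' i j - M i j ∈ Ideal.span {π ^ k} :=
    fun i j => Ideal.mem_span_singleton.mpr (hcong i j)
  have hv' : addVal R M'.det = v := by
    rw [← hv]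
    refine addVal_eq_of_addVal_lt_addVal_sub (lt_of_lt_of_le ?_ (le_addVal_of_pow_dvd hπ
      (Ideal.mem_span_singleton.mp (Matrix.det_sub_mem_of_sub_mem hI))))
    rw [hv, Nat.cast_lt]
    omega
  have hdet := ne_zero_of_addVal_eq_natCast hv
  have hdet' := ne_zero_of_addVal_eq_natCast hv'
  refine ⟨hdet', fun i j => ?_⟩
  have hprod : addVal R (M'.det * M.det) = (2 * v : ℕ) := by
    rw [addVal_mul, hv', hv]; norm_cast; ring
  obtain ⟨r, hr⟩ := exists_eq_mul_pow_mul_of_pow_dvd hπ hprod hk.le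
    (Ideal.mem_span_singleton.mp (Matrix.det_mul_adjugate_sub_det_mul_adjugate_mem hI i j))
  have hinj := IsFractionRing.injective R K
  refine ⟨r, ?_⟩
  rw [Matrix.inv_map_sub_inv_map_apply _ ((map_ne_zero_iff _ hinj).mpr hdet)
    ((map_ne_zero_iff _ hinj).mpr hdet'), hr, map_mul,
    mul_div_cancel_left₀ _ ((map_ne_zero_iff _ hinj).mpr (mul_ne_zero hdet' hdet))]

/-- **Precision of the inverse matrix.**
If `M` is invertible over the fraction field `K` (i.e. `det M ≠ 0`) with
`val (det M) = v`, and `M' ≡ M (mod π^k)` with `k > 2v`, then `M'` is invertible over `K`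
and every entry of `(M')⁻¹ - M⁻¹` lies in `π^{k - 2v} R`. -/
theorem inverse_precision {R : Type*} [CommRing R] [IsDomain R] [IsDiscreteValuationRing R]
    {K : Type*} [Field K] [Algebra R K] [IsFractionRing R K]
    (π : R) (hπ : Irreducible π) {n : ℕ} (M M' : Matrix (Fin n) (Fin n) R)
    (hdet : M.det ≠ 0) (v k : ℕ)
    (hv : IsDiscreteValuationRing.addVal R M.det = (v : ℕ∞))
    (hk : 2 * v < k)
    (hcong : ∀ i j, π ^ k ∣ M' i j - M i j) :
    M'.det ≠ 0 ∧
    ∀ i j, ∃ r : R,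
      ((M'.map (algebraMap R K))⁻¹ - (M.map (algebraMap R K))⁻¹) i j =
        algebraMap R K (π ^ (k - 2 * v) * r) :=
  inverse_precision_general π hπ M M' v k hv hk hcong
end

section
/- Let M be an n × m matrix (n ≤ m) over a discrete valuation ring R whose n × n principal minor Δ (determinant of the leftmost n × n submatrix) is nonzero. Then M can be brought to row-echelon form (up to row permutation) by elementary row operations over K, and the product of the pivots chosen on the first n columns during Gaussian elimination with smallest-valuation pivot choice has valuation equal to the minimal valuation among all n × n minors of M taken on the first n columns. -/
/-!
Elimination with a pivot of minimal valuation only ever divides by the pivot inside `R`: in a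
valuation ring the pivot divides every entry below it. So the elimination is `U * A` with
`U ∈ GL_n(R)`, and the product of the pivots is `det (U * A) = det U * Δ`, of valuation `val Δ`.
Every `n`-minor on the first `n` columns is `det (P * A)` for the row-selection matrix `P`,
hence a multiple of `Δ`, so their minimal valuation is attained at `Δ` itself.
-/

open Matrix IsDiscreteValuationRing

theorem ValuationRing.exists_dvd_forall_mem {R ι : Type*} [CommRing R] [IsDomain R]
    [ValuationRing R] (f : ι → R) {s : Finset ι} (hs : s.Nonempty) :
    ∃ i ∈ s, ∀ j ∈ s, f i ∣ f j := by
  classical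
  induction hs using Finset.Nonempty.cons_induction with
  | singleton a => exact ⟨a, by simp⟩
  | cons a s ha hs ih =>
    obtain ⟨i, hi, hmin⟩ := ih
    rcases dvd_total (f a) (f i) with hai | hia
    · refine ⟨a, Finset.mem_cons_self a s, ?_⟩
      simpa [hai] using fun j hj => hai.trans (hmin j hj)
    · exact ⟨i, Finset.mem_cons_of_mem hi, by simpa [hia] using hmin⟩

namespace Matrix

section Det

variable {R n : Type*} [CommRing R] [Fintype n] [DecidableEq n]

theorem det_one_sub_vecMulVec_single (c : n → R) (k : n) (hc : c k = 0) :
    det (1 - vecMulVec c (Pi.single k 1)) = 1 := by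
  rw [vecMulVec_eq Unit, det_one_sub_mul_comm, replicateRow_mul_replicateCol]
  simp [hc]

theorem det_dvd_det_submatrix (A : Matrix n n R) (r : n → n) :
    A.det ∣ (A.submatrix r id).det := by
  have h := submatrix_mul (1 : Matrix n n R) A r id id Function.bijective_id
  rw [Matrix.one_mul] at h
  rw [h, det_mul]
  exact dvd_mul_left _ _

end Det

def IsUpperTriangularUpTo {R : Type*} [Zero R] {n : ℕ} (k : ℕ) (B : Matrix (Fin n) (Fin n) R) :
    Prop :=
  ∀ i j : Fin n, (j : ℕ) < k → j < i → B i j = 0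

section ValuationRing

variable {R : Type*} [CommRing R] [IsDomain R] [ValuationRing R] {n : ℕ}

theorem IsUpperTriangularUpTo.exists_succ {k : ℕ} (hk : k < n) {B : Matrix (Fin n) (Fin n) R}
    (hB : IsUpperTriangularUpTo k B) :
    ∃ U : Matrix (Fin n) (Fin n) R, IsUnit U.det ∧ IsUpperTriangularUpTo (k + 1) (U * B) := by
  set kk : Fin n := ⟨k, hk⟩
  obtain ⟨p, hp, hpiv⟩ := ValuationRing.exists_dvd_forall_mem (fun i => B i kk)
    (Finset.nonempty_Ici (a := kk))
  rw [Finset.mem_Ici] at hp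
  set σ := Equiv.swap kk p
  have hσ_ge : ∀ i, kk ≤ i → kk ≤ σ i := by
    intro i hi
    rw [Equiv.swap_apply_def]
    split_ifs <;> first | assumption | exact le_rfl
  have hσ_lt : ∀ i j : Fin n, (j : ℕ) < k → j < i → j < σ i := by
    intro i j hjk hji
    rcases lt_or_ge i kk with hik | hki
    · rwa [Equiv.swap_apply_of_ne_of_ne hik.ne (hik.trans_le hp).ne]
    · exact lt_of_lt_of_le hjk (hσ_ge i hki)
  set C := σ.permMatrix R * B
  have hC : C = B.submatrix σ id := PEquiv.toMatrix_toPEquiv_mul σ B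
  have hC_zero : ∀ i j : Fin n, (j : ℕ) < k → j < i → C i j = 0 := fun i j hjk hji => by
    rw [hC]
    exact hB _ _ hjk (hσ_lt i j hjk hji)
  have hC_dvd : ∀ i, ∃ c, kk < i → C i kk = C kk kk * c := fun i => by
    by_cases hi : kk < i
    · obtain ⟨c, hc⟩ := hpiv (σ i) (Finset.mem_Ici.2 (hσ_ge i hi.le))
      exact ⟨c, fun _ => by simpa [hC, σ] using hc⟩
    · exact ⟨0, fun h => absurd h hi⟩
  choose c hc using hC_dvd
  set E : Matrix (Fin n) (Fin n) R := 1 - vecMulVec (fun i => if kk < i then c i else 0)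
    (Pi.single kk 1)
  have hEC : ∀ i j, (E * C) i j = C i j - (if kk < i then c i else 0) * C kk j := by
    intro i j
    simp [E, Matrix.sub_mul, vecMulVec_mul, vecMulVec_apply]
  refine ⟨E * σ.permMatrix R, ?_, ?_⟩
  · rw [det_mul, det_one_sub_vecMulVec_single _ _ (by simp), det_permutation, one_mul]
    exact (Equiv.Perm.sign σ).isUnit.map (Int.castRingHom R)
  · intro i j hjk hji
    rw [Matrix.mul_assoc, hEC]
    rcases (Nat.lt_succ_iff.1 hjk).lt_or_eq with hjk | hjk
    · rw [hC_zero i j hjk hji, hC_zero kk j hjk hjk]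
      ring
    · obtain rfl : j = kk := Fin.ext hjk
      rw [if_pos hji, hc i hji]
      ring

theorem exists_isUnit_det_mul_isUpperTriangularUpTo (A : Matrix (Fin n) (Fin n) R) :
    ∀ k ≤ n, ∃ U : Matrix (Fin n) (Fin n) R, IsUnit U.det ∧ IsUpperTriangularUpTo k (U * A)
  | 0, _ => ⟨1, by simp, fun _ j hj => absurd hj (Nat.not_lt_zero j)⟩
  | k + 1, hk => by
    obtain ⟨U, hU, hUA⟩ := exists_isUnit_det_mul_isUpperTriangularUpTo A k (by omega)
    obtain ⟨V, hV, hVUA⟩ := hUA.exists_succ hk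
    exact ⟨V * U, by rw [det_mul]; exact hV.mul hU, by rwa [Matrix.mul_assoc]⟩

theorem exists_isUnit_det_mul_isUpperTriangular (A : Matrix (Fin n) (Fin n) R) :
    ∃ U : Matrix (Fin n) (Fin n) R, IsUnit U.det ∧ (U * A).IsUpperTriangular := by
  obtain ⟨U, hU, hUA⟩ := exists_isUnit_det_mul_isUpperTriangularUpTo A n le_rfl
  exact ⟨U, hU, fun i j hji => hUA i j j.isLt hji⟩

end ValuationRing

end Matrix

theorem gaussian_pivot_valuation_general {R : Type*} [CommRing R] [IsDomain R]
    [IsDiscreteValuationRing R] {n m : ℕ} (hnm : n ≤ m) (M : Matrix (Fin n) (Fin m) R) :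
    ∃ U : Matrix (Fin n) (Fin n) R, IsUnit U.det ∧
      (∀ i j : Fin n, (j : ℕ) < (i : ℕ) → (U * M) i (Fin.castLE hnm j) = 0) ∧
      IsDiscreteValuationRing.addVal R (∏ i : Fin n, (U * M) i (Fin.castLE hnm i)) =
        ⨅ r : Fin n → Fin n, IsDiscreteValuationRing.addVal R
          (Matrix.det (Matrix.of fun i j : Fin n => M (r i) (Fin.castLE hnm j))) := by
  set A := M.submatrix id (Fin.castLE hnm)
  obtain ⟨U, hU, hUA⟩ := exists_isUnit_det_mul_isUpperTriangular A
  refine ⟨U, hU, fun i j hji => hUA hji, ?_⟩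
  have hpivots : ∏ i, (U * M) i (Fin.castLE hnm i) = U.det * A.det := by
    rw [← det_mul, det_of_isUpperTriangular hUA]
    rfl
  rw [hpivots, addVal_mul, addVal_eq_zero_iff.2 hU, zero_add]
  refine le_antisymm (le_iInf fun r => addVal_le_iff_dvd.2 (det_dvd_det_submatrix A r)) ?_
  exact iInf_le_of_le id le_rfl

/-- **Gaussian elimination over a DVR: valuation of the product of the pivots.**
If the principal `n × n` minor of an `n × m` matrix `M` over a DVR is nonzero, then `M`
can be brought to row-echelon form (up to permutation) by row operations invertible over
`R`, and the valuation of the product of the resulting pivots on the first `n` columns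
equals the minimal valuation among the `n × n` minors of `M` on the first `n` columns. -/
theorem gaussian_pivot_valuation {R : Type*} [CommRing R] [IsDomain R]
    [IsDiscreteValuationRing R] {n m : ℕ} (hnm : n ≤ m) (M : Matrix (Fin n) (Fin m) R)
    (hΔ : (Matrix.of fun i j : Fin n => M i (Fin.castLE hnm j)).det ≠ 0) :
    ∃ U : Matrix (Fin n) (Fin n) R, IsUnit U.det ∧
      (∀ i j : Fin n, (j : ℕ) < (i : ℕ) → (U * M) i (Fin.castLE hnm j) = 0) ∧
      IsDiscreteValuationRing.addVal R (∏ i : Fin n, (U * M) i (Fin.castLE hnm i)) =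
        ⨅ r : Fin n → Fin n, IsDiscreteValuationRing.addVal R
          (Matrix.det (Matrix.of fun i j : Fin n => M (r i) (Fin.castLE hnm j))) :=
  gaussian_pivot_valuation_general hnm M
end

section
/- Let K be a field, A = K[X₁,…,Xₙ], w a monomial order on A, and I = ⟨f₁,…,f_s⟩ a homogeneous ideal. The set {f₁,…,f_s} of homogeneous polynomials is a Gröbner basis of I with respect to w if and only if for every degree d, the K-vector space I ∩ A_d admits a basis consisting of polynomials of the form x^α·f_i (with |α| + deg f_i = d) having pairwise distinct leading monomials. -/
open MvPolynomial

structure MonOrder (n : ℕ) where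
  le : (Fin n →₀ ℕ) → (Fin n →₀ ℕ) → Prop
  le_refl : ∀ a, le a a
  le_trans : ∀ a b c, le a b → le b c → le a c
  le_antisymm : ∀ a b, le a b → le b a → a = b
  le_total : ∀ a b, le a b ∨ le b a
  add_le_add : ∀ a b c, le a b → le (a + c) (b + c)
  zero_le : ∀ a, le 0 a

/-- Strict comparison for a monomial order. -/
def MonOrder.lt {n : ℕ} (w : MonOrder n) (a b : Fin n →₀ ℕ) : Prop := w.le a b ∧ a ≠ b

/-- Total degree of an exponent vector. -/
def monDeg {n : ℕ} (a : Fin n →₀ ℕ) : ℕ := a.sum fun _ e => e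

/-- Divisibility of monomials (on exponent vectors). -/
def MonDvd {n : ℕ} (a b : Fin n →₀ ℕ) : Prop := ∃ c, b = a + c

/-- `m` is the leading monomial of `f` with respect to `w`. -/
def IsLM {n : ℕ} {K : Type*} [Field K] (w : MonOrder n)
    (f : MvPolynomial (Fin n) K) (m : Fin n →₀ ℕ) : Prop :=
  m ∈ f.support ∧ ∀ m' ∈ f.support, w.le m' m

/-- The set of leading monomials of nonzero elements of the ideal `I`. -/
def LMset {n : ℕ} {K : Type*} [Field K] (w : MonOrder n)
    (I : Ideal (MvPolynomial (Fin n) K)) : Set (Fin n →₀ ℕ) :=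
  {m | ∃ f ∈ I, f ≠ 0 ∧ IsLM w f m}

/-- `G` is a Gröbner basis of the ideal `I` with respect to `w`. -/
def IsGB {n : ℕ} {K : Type*} [Field K] (w : MonOrder n)
    (G : Set (MvPolynomial (Fin n) K)) (I : Ideal (MvPolynomial (Fin n) K)) : Prop :=
  G.Finite ∧ G ⊆ ↑I ∧ ∀ f ∈ I, f ≠ 0 → ∃ g ∈ G, ∃ mg mf,
    IsLM w g mg ∧ IsLM w f mf ∧ MonDvd mg mf

/-- `G` is the reduced Gröbner basis of `I`: a Gröbner basis whose elements are monic
and such that no monomial of an element is divisible by the leading monomial of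
another element. -/
def IsReducedGB {n : ℕ} {K : Type*} [Field K] (w : MonOrder n)
    (G : Set (MvPolynomial (Fin n) K)) (I : Ideal (MvPolynomial (Fin n) K)) : Prop :=
  IsGB w G I ∧ (∀ g ∈ G, ∀ m, IsLM w g m → MvPolynomial.coeff m g = 1) ∧
  ∀ g ∈ G, ∀ g' ∈ G, g ≠ g' → ∀ m ∈ g.support, ∀ m', IsLM w g' m' → ¬ MonDvd m' m

/-- `I` is a weakly-`w`-ideal: for every leading monomial `α` of an element of the
reduced Gröbner basis of `I`, every monomial `β` of the same degree with `β > α`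
belongs to `LM(I)`. -/
def IsWeaklyW {n : ℕ} {K : Type*} [Field K] (w : MonOrder n)
    (I : Ideal (MvPolynomial (Fin n) K)) : Prop :=
  ∀ G, IsReducedGB w G I → ∀ g ∈ G, ∀ α, IsLM w g α →
    ∀ β, monDeg β = monDeg α → w.lt α β → β ∈ LMset w I

/-!
Everything is Gaussian elimination with respect to `w`. A finite family with pairwise distinct
leading monomials is linearly independent, and every nonzero element of its span has the leading
monomial of one of its members; conversely a subspace is spanned by such a family as soon as every
leading monomial of the subspace occurs in it. If the `f i` form a Gröbner basis, every leading
monomial of degree `d` in `I` is `x^α · LM(f i)`, and one such product per monomial is the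
required basis of `I ∩ A_d`. Conversely, the leading monomial of `p ∈ I` is also that of its
homogeneous component of the same degree, which lies in `I ∩ A_d` because `I` is homogeneous, so
it is the leading monomial of some `x^α · f i`.
-/

namespace MonOrder

variable {n : ℕ} (w : MonOrder n)

open Classical in
/-- Not an instance: `Fin n →₀ ℕ` already carries the pointwise order. -/
noncomputable abbrev toLinearOrder : LinearOrder (Fin n →₀ ℕ) where
  le := w.le
  lt a b := w.le a b ∧ ¬ w.le b a
  min a b := if w.le a b then a else b
  max a b := if w.le a b then b else a
  le_refl := w.le_refl
  le_trans := w.le_trans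
  le_antisymm := w.le_antisymm
  le_total := w.le_total
  toDecidableLE := Classical.decRel _

theorem exists_max_image {ι : Type*} (s : Finset ι) (F : ι → Fin n →₀ ℕ)
    (hs : s.Nonempty) :
    ∃ i ∈ s, ∀ j ∈ s, w.le (F j) (F i) :=
  @Finset.exists_max_image _ _ w.toLinearOrder s F hs

variable {w}

theorem lt_of_le_of_lt {a b c : Fin n →₀ ℕ} (hab : w.le a b) (hbc : w.lt b c) : w.lt a c :=
  ⟨w.le_trans _ _ _ hab hbc.1, fun hac => hbc.2 (w.le_antisymm _ _ hbc.1 (hac ▸ hab))⟩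

theorem le_of_le {a b : Fin n →₀ ℕ} (h : a ≤ b) : w.le a b := by
  obtain ⟨c, rfl⟩ := exists_add_of_le h
  simpa [add_comm] using w.add_le_add 0 c a (w.zero_le c)

variable (w)

/-- Dickson's lemma makes every monomial order a well-order. -/
theorem wellFounded_lt : WellFounded w.lt := by
  have hwqo : WellQuasiOrdered w.le := fun F =>
    let ⟨i, j, hij, h⟩ := wellQuasiOrdered_le F
    ⟨i, j, hij, le_of_le h⟩
  have : IsPreorder _ w.le := { refl := w.le_refl, trans := w.le_trans }
  refine Subrelation.wf (fun {a b} hab => ⟨hab.1, fun hba => hab.2 ?_⟩) hwqo.wellFounded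
  exact w.le_antisymm _ _ hab.1 hba

end MonOrder

section LeadingMonomial

variable {n : ℕ} {K : Type*} [Field K] {w : MonOrder n} {p q : MvPolynomial (Fin n) K}
  {m m' : Fin n →₀ ℕ}

variable (w) in
theorem exists_isLM (hp : p ≠ 0) : ∃ m, IsLM w p m :=
  w.exists_max_image p.support id (support_nonempty.2 hp)

theorem IsLM.ne_zero (h : IsLM w p m) : p ≠ 0 := ne_zero_iff.2 ⟨m, mem_support_iff.1 h.1⟩

theorem IsLM.unique (h : IsLM w p m) (h' : IsLM w p m') : m = m' :=
  w.le_antisymm _ _ (h'.2 m h.1) (h.2 m' h'.1)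

theorem IsLM.smul (h : IsLM w p m) {c : K} (hc : c ≠ 0) : IsLM w (c • p) m := by
  simpa only [IsLM, support_smul_eq hc] using h

theorem IsLM.add_of_lt (hp : IsLM w p m) (hq : ∀ m' ∈ q.support, w.lt m' m) :
    IsLM w (p + q) m := by
  classical
  have hqm : coeff m q = 0 := notMem_support_iff.1 fun hm => (hq m hm).2 rfl
  refine ⟨by simpa [coeff_add, hqm] using hp.1, fun m' hm' => ?_⟩
  rcases Finset.mem_union.1 (support_add hm') with hm' | hm'
  · exact hp.2 m' hm'
  · exact (hq m' hm').1

theorem mem_support_monomial_one_mul {α : Fin n →₀ ℕ} :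
    m ∈ (monomial α (1 : K) * p).support ↔ ∃ β ∈ p.support, m = α + β := by
  classical
  simp only [mem_support_iff, coeff_monomial_mul', one_mul]
  constructor
  · intro h
    by_cases hle : α ≤ m
    · exact ⟨m - α, by simpa [hle] using h, (add_tsub_cancel_of_le hle).symm⟩
    · simp [hle] at h
  · rintro ⟨β, hβ, rfl⟩
    simpa using hβ

theorem IsLM.monomial_one_mul (h : IsLM w p m) (α : Fin n →₀ ℕ) :
    IsLM w (monomial α (1 : K) * p) (α + m) := by
  refine ⟨mem_support_monomial_one_mul.2 ⟨m, h.1, rfl⟩, fun m' hm' => ?_⟩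
  obtain ⟨β, hβ, rfl⟩ := mem_support_monomial_one_mul.1 hm'
  simpa only [add_comm α] using w.add_le_add β m α (h.2 β hβ)

theorem IsLM.exists_dvd_of_monomial_one_mul {α : Fin n →₀ ℕ}
    (h : IsLM w (monomial α (1 : K) * p) m) : ∃ mp, IsLM w p mp ∧ MonDvd mp m := by
  obtain ⟨mp, hmp⟩ := exists_isLM w (right_ne_zero_of_mul h.ne_zero)
  exact ⟨mp, hmp, α, by rw [h.unique (hmp.monomial_one_mul α), add_comm]⟩

theorem IsLM.lt_of_mem_support_sub (hp : IsLM w p m) (hq : IsLM w q m)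
    (hm' : m' ∈ (p - (coeff m p / coeff m q) • q).support) : w.lt m' m := by
  classical
  refine ⟨?_, ?_⟩
  · rcases Finset.mem_union.1 (support_sub _ p _ hm') with h | h
    · exact hp.2 m' h
    · exact hq.2 m' (support_smul h)
  · rintro rfl
    apply mem_support_iff.1 hm'
    rw [coeff_sub, coeff_smul, smul_eq_mul, div_mul_cancel₀ _ (mem_support_iff.1 hq.1), sub_self]

theorem monDeg_eq_degree (a : Fin n →₀ ℕ) : monDeg a = a.degree := rfl

theorem MvPolynomial.IsHomogeneous.monDeg_eq_of_mem_support {d : ℕ} (hp : p.IsHomogeneous d)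
    (hm : m ∈ p.support) :
    monDeg m = d := by
  by_contra h
  exact mem_support_iff.1 hm (hp.coeff_eq_zero h)

theorem IsLM.homogeneousComponent (h : IsLM w p m) :
    IsLM w (homogeneousComponent (monDeg m) p) m := by
  refine ⟨?_, fun m' hm' => h.2 m' ?_⟩
  · rw [mem_support_iff, coeff_homogeneousComponent, monDeg_eq_degree, if_pos rfl]
    exact mem_support_iff.1 h.1
  · rw [mem_support_iff, coeff_homogeneousComponent] at hm'
    exact mem_support_iff.2 fun hp => hm' (by simp [hp])

end LeadingMonomial

section Echelon

variable {n : ℕ} {K : Type*} [Field K] (w : MonOrder n)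

def LMDistinct (B : Set (MvPolynomial (Fin n) K)) : Prop :=
  B.Pairwise fun b b' => ∀ m m', IsLM w b m → IsLM w b' m' → m ≠ m'

variable {w}

/-- The summand with the largest leading monomial among those with nonzero coefficient dominates:
all other summands lie strictly below it. -/
theorem LMDistinct.exists_isLM_sum_smul {B : Finset (MvPolynomial (Fin n) K)} (h0 : 0 ∉ B)
    (hB : LMDistinct w (B : Set (MvPolynomial (Fin n) K))) {c : MvPolynomial (Fin n) K → K}
    (hc : ∃ b ∈ B, c b ≠ 0) :
    ∃ b ∈ B, ∃ m, IsLM w b m ∧ IsLM w (∑ b ∈ B, c b • b) m := by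
  classical
  choose! lm hlm using fun b (hb : b ∈ B) => exists_isLM w (ne_of_mem_of_not_mem hb h0)
  set B' := B.filter (c · ≠ 0)
  have hB'B : B' ⊆ B := Finset.filter_subset _ _
  obtain ⟨b₀, hb₀, hmax⟩ :=
    w.exists_max_image B' lm (by simpa [B', Finset.Nonempty] using hc)
  have hcb₀ : c b₀ ≠ 0 := (Finset.mem_filter.1 hb₀).2
  have hrest : ∀ m' ∈ (∑ b ∈ B'.erase b₀, c b • b).support, w.lt m' (lm b₀) := by
    intro m' hm'
    obtain ⟨b, hb, hm'b⟩ := Finset.mem_biUnion.1 (support_sum hm')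
    have hbB' := Finset.mem_of_mem_erase hb
    refine MonOrder.lt_of_le_of_lt ((hlm b (hB'B hbB')).2 m' (support_smul hm'b))
      ⟨hmax b hbB', ?_⟩
    exact hB (hB'B hbB') (hB'B hb₀) (Finset.ne_of_mem_erase hb) _ _
      (hlm b (hB'B hbB')) (hlm b₀ (hB'B hb₀))
  refine ⟨b₀, hB'B hb₀, lm b₀, hlm b₀ (hB'B hb₀), ?_⟩
  have hsum : ∑ b ∈ B, c b • b = c b₀ • b₀ + ∑ b ∈ B'.erase b₀, c b • b := by
    rw [Finset.add_sum_erase B' (fun b => c b • b) hb₀]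
    exact (Finset.sum_filter_of_ne (p := (c · ≠ 0))
      fun b _ hb hcb => hb (by rw [hcb, zero_smul])).symm
  rw [hsum]
  exact ((hlm b₀ (hB'B hb₀)).smul hcb₀).add_of_lt hrest

theorem exists_finset_lmDistinct {M : Set (Fin n →₀ ℕ)} (hM : M.Finite)
    {P : MvPolynomial (Fin n) K → Prop} (h : ∀ m ∈ M, ∃ b, P b ∧ IsLM w b m) :
    ∃ B : Finset (MvPolynomial (Fin n) K), (∀ b ∈ B, P b) ∧ 0 ∉ B ∧
      LMDistinct w (B : Set (MvPolynomial (Fin n) K)) ∧ ∀ m ∈ M, ∃ b ∈ B, IsLM w b m := by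
  classical
  choose! bf hbfP hbfm using h
  have hmem : ∀ b ∈ hM.toFinset.image bf, ∃ m ∈ M, bf m = b := by simp
  refine ⟨hM.toFinset.image bf, fun b hb => ?_, fun h0 => ?_, ?_, fun m hm => ?_⟩
  · obtain ⟨m, hm, rfl⟩ := hmem b hb
    exact hbfP m hm
  · obtain ⟨m, hm, hbf⟩ := hmem 0 h0
    exact (hbfm m hm).ne_zero hbf
  · rintro b hb b' hb' hne k _ hk hk' rfl
    obtain ⟨m, hm, rfl⟩ := hmem b hb
    obtain ⟨m', hm', rfl⟩ := hmem b' hb'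
    exact hne (by rw [(hbfm m hm).unique hk, (hbfm m' hm').unique hk'])
  · exact ⟨bf m, Finset.mem_image_of_mem _ (hM.mem_toFinset.2 hm), hbfm m hm⟩

theorem LMDistinct.linearIndepOn {B : Finset (MvPolynomial (Fin n) K)} (h0 : 0 ∉ B)
    (hB : LMDistinct w (B : Set (MvPolynomial (Fin n) K))) :
    LinearIndepOn K id (B : Set (MvPolynomial (Fin n) K)) := by
  refine linearIndepOn_finset_iff.2 fun c hc b hb => ?_
  by_contra hcb
  obtain ⟨-, -, m, -, hm⟩ := hB.exists_isLM_sum_smul h0 ⟨b, hb, hcb⟩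
  exact hm.ne_zero hc

theorem LMDistinct.exists_isLM_of_mem_span {B : Finset (MvPolynomial (Fin n) K)} (h0 : 0 ∉ B)
    (hB : LMDistinct w (B : Set (MvPolynomial (Fin n) K))) {p : MvPolynomial (Fin n) K}
    {m : Fin n →₀ ℕ} (hp : p ∈ Submodule.span K (B : Set _)) (hm : IsLM w p m) :
    ∃ b ∈ B, IsLM w b m := by
  obtain ⟨c, -, rfl⟩ := Submodule.mem_span_finset.1 hp
  have hc : ∃ b ∈ B, c b ≠ 0 := by
    by_contra! hc
    exact hm.ne_zero (Finset.sum_eq_zero fun b hb => by rw [hc b hb, zero_smul])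
  obtain ⟨b, hb, m', hbm', hm'⟩ := hB.exists_isLM_sum_smul h0 hc
  exact ⟨b, hb, hm'.unique hm ▸ hbm'⟩

/-- Reduction: subtracting from `p` the multiple of `b` that cancels their common leading
monomial strictly lowers the leading monomial, and monomial orders are well-founded. -/
theorem le_span_of_forall_isLM {V : Submodule K (MvPolynomial (Fin n) K)}
    {B : Set (MvPolynomial (Fin n) K)} (hBV : B ⊆ V)
    (hB : ∀ p ∈ V, ∀ m, IsLM w p m → ∃ b ∈ B, IsLM w b m) :
    V ≤ Submodule.span K B := by
  suffices key : ∀ m, ∀ p ∈ V, IsLM w p m → p ∈ Submodule.span K B by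
    intro p hp
    rcases eq_or_ne p 0 with rfl | hp0
    · exact zero_mem _
    · obtain ⟨m, hm⟩ := exists_isLM w hp0
      exact key m p hp hm
  intro m
  induction m using w.wellFounded_lt.induction with
  | _ m ih =>
  intro p hp hpm
  obtain ⟨b, hbB, hbm⟩ := hB p hp m hpm
  set γ := coeff m p / coeff m b
  have hrem : p - γ • b ∈ V := V.sub_mem hp (V.smul_mem γ (hBV hbB))
  have hrem_span : p - γ • b ∈ Submodule.span K B := by
    rcases eq_or_ne (p - γ • b) 0 with h | h
    · rw [h]
      exact zero_mem _
    · obtain ⟨m', hm'⟩ := exists_isLM w h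
      exact ih m' (hpm.lt_of_mem_support_sub hbm hm'.1) _ hrem hm'
  simpa using add_mem hrem_span (Submodule.smul_mem _ γ (Submodule.subset_span hbB))

end Echelon

section Lazard

variable {n s : ℕ} {K : Type*} [Field K] {w : MonOrder n} {f : Fin s → MvPolynomial (Fin n) K}
  {I : Ideal (MvPolynomial (Fin n) K)}

theorem IsGB.exists_monomial_one_mul_isLM (hGB : IsGB w (Set.range f) I) {m : Fin n →₀ ℕ}
    (hm : m ∈ LMset w I) : ∃ i α, IsLM w (monomial α 1 * f i) m := by
  obtain ⟨p, hpI, hp0, hpm⟩ := hm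
  obtain ⟨-, ⟨i, rfl⟩, mi, mp, hmi, hmp, α, hα⟩ := hGB.2.2 p hpI hp0
  refine ⟨i, α, ?_⟩
  rw [hpm.unique hmp, hα, add_comm]
  exact hmi.monomial_one_mul α

theorem IsGB.exists_echelon_family {dg : Fin s → ℕ} (hhom : ∀ i, (f i).IsHomogeneous (dg i))
    (hGB : IsGB w (Set.range f) I) (d : ℕ) :
    ∃ B : Finset (MvPolynomial (Fin n) K),
      (∀ b ∈ B, ∃ i α, b = monomial α 1 * f i ∧ monDeg α + dg i = d) ∧ 0 ∉ B ∧
      LMDistinct w (B : Set (MvPolynomial (Fin n) K)) ∧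
      ∀ p ∈ I, p.IsHomogeneous d → ∀ m, IsLM w p m → ∃ b ∈ B, IsLM w b m := by
  have hM : {m | monDeg m = d ∧ m ∈ LMset w I}.Finite :=
    (Finsupp.finite_of_degree_eq d).subset fun m hm => hm.1
  obtain ⟨B, hBform, h0, hBdist, hBcover⟩ := exists_finset_lmDistinct hM
    (P := fun b => ∃ i α, b = monomial α 1 * f i ∧ monDeg α + dg i = d) <| by
      rintro m ⟨rfl, hm⟩
      obtain ⟨i, α, hαi⟩ := hGB.exists_monomial_one_mul_isLM hm
      refine ⟨_, ⟨i, α, rfl, ?_⟩, hαi⟩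
      exact (((isHomogeneous_monomial 1 rfl).mul (hhom i)).monDeg_eq_of_mem_support hαi.1).symm
  refine ⟨B, hBform, h0, hBdist, fun p hpI hp m hm => hBcover m ?_⟩
  exact ⟨hp.monDeg_eq_of_mem_support hm.1, p, hpI, hm.ne_zero, hm⟩

end Lazard

attribute [local instance] MvPolynomial.gradedAlgebra

theorem lazard_criterion_general {n s : ℕ} {K : Type*} [Field K]
    (w : MonOrder n) (f : Fin s → MvPolynomial (Fin n) K) (dg : Fin s → ℕ)
    (hhom : ∀ i, (f i).IsHomogeneous (dg i))
    (I : Ideal (MvPolynomial (Fin n) K)) (hI : I = Ideal.span (Set.range f)) :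
    IsGB w (Set.range f) I ↔
      ∀ d : ℕ, ∃ B : Finset (MvPolynomial (Fin n) K),
        (∀ b ∈ B, ∃ (i : Fin s) (α : Fin n →₀ ℕ),
            b = MvPolynomial.monomial α 1 * f i ∧ monDeg α + dg i = d) ∧
        (∀ b ∈ B, ∀ b' ∈ B, b ≠ b' →
            ∀ mb mb', IsLM w b mb → IsLM w b' mb' → mb ≠ mb') ∧
        LinearIndependent K (fun b : B => (b : MvPolynomial (Fin n) K)) ∧
        Submodule.span K (B : Set (MvPolynomial (Fin n) K)) =
          Submodule.restrictScalars K I ⊓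
            MvPolynomial.homogeneousSubmodule (Fin n) K d := by
  have hfI : ∀ i, f i ∈ I := fun i => hI ▸ Ideal.subset_span ⟨i, rfl⟩
  constructor
  · intro hGB d
    obtain ⟨B, hBform, h0, hBdist, hBcover⟩ := hGB.exists_echelon_family hhom d
    have hBV : (B : Set (MvPolynomial (Fin n) K)) ⊆
        I.restrictScalars K ⊓ homogeneousSubmodule (Fin n) K d := by
      intro b hb
      obtain ⟨i, α, rfl, hdeg⟩ := hBform b hb
      exact ⟨I.mul_mem_left _ (hfI i), hdeg ▸ (isHomogeneous_monomial 1 rfl).mul (hhom i)⟩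
    refine ⟨B, hBform, hBdist, hBdist.linearIndepOn h0,
      le_antisymm (Submodule.span_le.2 hBV) (le_span_of_forall_isLM (w := w) hBV fun p hp => ?_)⟩
    exact hBcover p hp.1 ((mem_homogeneousSubmodule _ _).1 hp.2)
  · intro hB
    have hIhom : I.IsHomogeneous (homogeneousSubmodule (Fin n) K) :=
      hI ▸ Ideal.homogeneous_span _ _ (by rintro _ ⟨i, rfl⟩; exact ⟨dg i, hhom i⟩)
    refine ⟨Set.finite_range f, Set.range_subset_iff.2 hfI, fun p hp hp0 => ?_⟩
    obtain ⟨m, hm⟩ := exists_isLM w hp0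
    obtain ⟨B, hBform, hBdist, hBli, hBspan⟩ := hB (monDeg m)
    have hpm : homogeneousComponent (monDeg m) p ∈ Submodule.span K (B : Set _) :=
      hBspan ▸ ⟨homogeneousComponent_mem_of_mem hIhom hp _, homogeneousComponent_mem _ _⟩
    have h0 : (0 : MvPolynomial (Fin n) K) ∉ B := fun h => hBli.ne_zero ⟨0, h⟩ rfl
    obtain ⟨b, hb, hbm⟩ :=
      LMDistinct.exists_isLM_of_mem_span h0 hBdist hpm hm.homogeneousComponent
    obtain ⟨i, α, rfl, -⟩ := hBform b hb
    obtain ⟨mi, hmi, hdvd⟩ := hbm.exists_dvd_of_monomial_one_mul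
    exact ⟨f i, ⟨i, rfl⟩, mi, m, hmi, hm, hdvd⟩

/-- **Lazard's criterion.**  A family of homogeneous polynomials `f₁, …, f_s` is a
Gröbner basis of the homogeneous ideal `I` it generates iff for every degree `d` the
space `I ∩ A_d` admits a `K`-basis consisting of polynomials of the form `x^α * f i`
(with `|α| + deg f i = d`) having pairwise distinct leading monomials. -/
theorem lazard_criterion {n s : ℕ} {K : Type*} [Field K]
    (w : MonOrder n) (f : Fin s → MvPolynomial (Fin n) K) (dg : Fin s → ℕ)
    (hf : ∀ i, f i ≠ 0) (hhom : ∀ i, (f i).IsHomogeneous (dg i))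
    (I : Ideal (MvPolynomial (Fin n) K)) (hI : I = Ideal.span (Set.range f)) :
    IsGB w (Set.range f) I ↔
      ∀ d : ℕ, ∃ B : Finset (MvPolynomial (Fin n) K),
        (∀ b ∈ B, ∃ (i : Fin s) (α : Fin n →₀ ℕ),
            b = MvPolynomial.monomial α 1 * f i ∧ monDeg α + dg i = d) ∧
        (∀ b ∈ B, ∀ b' ∈ B, b ≠ b' →
            ∀ mb mb', IsLM w b mb → IsLM w b' mb' → mb ≠ mb') ∧
        LinearIndependent K (fun b : B => (b : MvPolynomial (Fin n) K)) ∧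
        Submodule.span K (B : Set (MvPolynomial (Fin n) K)) =
          Submodule.restrictScalars K I ⊓
            MvPolynomial.homogeneousSubmodule (Fin n) K d :=
  lazard_criterion_general w f dg hhom I hI
end
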